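/- Let M, N ≥ 1 and σ > 0. Set a = (σ²/(σ²+1))^{M/2} and b = (2σ²/(2σ²+1))^{M/2}, and let K̃ be the (N+1)×(N+1) matrix indexed by {0,…,N} with K̃_{n,n} = 1 for all n, K̃_{n,n'} = a for 1 ≤ n ≠ n' ≤ N, and K̃_{0,n} = K̃_{n,0} = b for 1 ≤ n ≤ N. Let λ* ∈ ℝ^{N+1} be a probability vector. Suppose K̃ is invertible and λ̃ maximizes the Jensen-bound objective f (with K = K̃) over S with all entries of λ̃ strictly positive. Then there exist c₁ ≥ 0 and c₂ ∈ ℝ such that λ̃_n = c₁ λ*_n + c₂ for all 1 ≤ n ≤ N. -/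

import Mathlib

/-!
Write `u = K̃λ̃`. Moving mass between two indices `i, j ≠ 0` keeps `λ̃` in `S` and, since the
columns `i` and `j` of `K̃` differ only in the rows `i` and `j` (by `1 - a`), first-order optimality
of `λ̃` gives `λ*ᵢ / uᵢ = λ*ⱼ / uⱼ`. On the nonzero indices `uₙ = (1 - a) λ̃ₙ + const`, so `λ̃` is
affine in `λ*` there with slope `(uₖ / λ*ₖ) / (1 - a) ≥ 0` for any `k ≠ 0` with `λ*ₖ > 0`. Such a
`k` exists: otherwise `λ* = e₀`, the objective is `log u₀`, and `u₀ < 1 = (K̃ e₀)₀`.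
-/

open Matrix Filter Topology

theorem div_add_one_rpow_mem_Ico {t p : ℝ} (ht : 0 ≤ t) (hp : 0 < p) :
    (t / (t + 1)) ^ p ∈ Set.Ico 0 1 :=
  ⟨by positivity,
    Real.rpow_lt_one (by positivity) ((div_lt_one (by positivity)).2 (by linarith)) hp⟩

noncomputable def jensenObjective {ι : Type*} [Fintype ι] (w : ι → ℝ) (K : Matrix ι ι ℝ)
    (lam : ι → ℝ) : ℝ :=
  ∑ n, w n * Real.log ((K *ᵥ lam) n)

section Stationarity

variable {ι : Type*} [Fintype ι] {w : ι → ℝ} {K : Matrix ι ι ℝ} {lam : ι → ℝ}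

theorem hasDerivAt_jensenObjective_add_smul (hu : ∀ n, (K *ᵥ lam) n ≠ 0) (d : ι → ℝ) :
    HasDerivAt (fun t : ℝ => jensenObjective w K (lam + t • d))
      (∑ n, w n * ((K *ᵥ d) n / (K *ᵥ lam) n)) 0 := by
  simp only [jensenObjective, mulVec_add, mulVec_smul, Pi.add_apply, Pi.smul_apply, smul_eq_mul]
  refine HasDerivAt.fun_sum fun n _ => HasDerivAt.const_mul _ ?_
  simpa using (((hasDerivAt_id (0 : ℝ)).mul_const ((K *ᵥ d) n)).const_add ((K *ᵥ lam) n)).log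
    (by simpa using hu n)

theorem jensenObjective_stationary
    (hmax : ∀ μ : ι → ℝ, (∀ n, 0 ≤ μ n) → ∑ n, μ n ≤ 1 →
      jensenObjective w K μ ≤ jensenObjective w K lam)
    (hsum : ∑ n, lam n ≤ 1) (hpos : ∀ n, 0 < lam n) (hu : ∀ n, (K *ᵥ lam) n ≠ 0)
    {d : ι → ℝ} (hd : ∑ n, d n = 0) :
    ∑ n, w n * ((K *ᵥ d) n / (K *ᵥ lam) n) = 0 := by
  refine IsLocalMax.hasDerivAt_eq_zero ?_ (hasDerivAt_jensenObjective_add_smul hu d)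
  have hfeas : ∀ᶠ t in 𝓝 (0 : ℝ), ∀ n, 0 < lam n + t * d n := by
    refine eventually_all.2 fun n => Tendsto.eventually_const_lt (hpos n) ?_
    simpa using ((continuous_id.mul continuous_const).const_add (lam n)).tendsto (0 : ℝ)
  filter_upwards [hfeas] with t ht
  rw [zero_smul, add_zero]
  refine hmax _ (fun n => (ht n).le) ?_
  simpa [Finset.sum_add_distrib, ← Finset.mul_sum, hd] using hsum

end Stationarity

def jensenKernel (N : ℕ) (a b : ℝ) : Matrix (Fin (N + 1)) (Fin (N + 1)) ℝ :=
  Matrix.of fun n n' => if n = n' then 1 else if n = 0 ∨ n' = 0 then b else a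

namespace jensenKernel

variable {N : ℕ} {a b : ℝ}

theorem nonneg (ha : 0 ≤ a) (hb : 0 ≤ b) (n m : Fin (N + 1)) : 0 ≤ jensenKernel N a b n m := by
  simp only [jensenKernel, of_apply]
  split_ifs <;> positivity

theorem mulVec_apply_of_ne_zero {n : Fin (N + 1)} (hn : n ≠ 0) (v : Fin (N + 1) → ℝ) :
    (jensenKernel N a b *ᵥ v) n = (1 - a) * v n + (b - a) * v 0 + a * ∑ m, v m := by
  have hentry : ∀ m, jensenKernel N a b n m * v m =
      (1 - a) * (if n = m then v m else 0) + (b - a) * (if m = 0 then v m else 0) + a * v m := by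
    intro m
    simp only [jensenKernel, of_apply]
    split_ifs <;> simp_all <;> ring
  simp only [mulVec, dotProduct, hentry, Finset.sum_add_distrib, ← Finset.mul_sum,
    Finset.sum_ite_eq, Finset.sum_ite_eq', Finset.mem_univ, if_true]

theorem mulVec_apply_zero (v : Fin (N + 1) → ℝ) :
    (jensenKernel N a b *ᵥ v) 0 = (1 - b) * v 0 + b * ∑ m, v m := by
  have hentry : ∀ m, jensenKernel N a b 0 m * v m =
      (1 - b) * (if 0 = m then v m else 0) + b * v m := by
    intro m
    simp only [jensenKernel, of_apply]
    split_ifs <;> simp_all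
    ring
  simp only [mulVec, dotProduct, hentry, Finset.sum_add_distrib, ← Finset.mul_sum,
    Finset.sum_ite_eq, Finset.mem_univ, if_true]

theorem mulVec_of_sum_eq_zero {d : Fin (N + 1) → ℝ} (hd0 : d 0 = 0) (hd : ∑ m, d m = 0) :
    jensenKernel N a b *ᵥ d = (1 - a) • d := by
  funext n
  rcases eq_or_ne n 0 with rfl | hn
  · simp [mulVec_apply_zero, hd0, hd]
  · simp [mulVec_apply_of_ne_zero hn, hd0, hd]

theorem le_mulVec_apply (ha : 0 ≤ a) (hb : 0 ≤ b) {v : Fin (N + 1) → ℝ} (hv : ∀ m, 0 < v m)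
    (n : Fin (N + 1)) : v n ≤ (jensenKernel N a b *ᵥ v) n := by
  calc v n = jensenKernel N a b n n * v n := by simp [jensenKernel]
    _ ≤ (jensenKernel N a b *ᵥ v) n :=
      Finset.single_le_sum (fun m _ => mul_nonneg (nonneg ha hb n m) (hv m).le) (Finset.mem_univ n)

theorem mulVec_apply_zero_lt_one (hb : b < 1) {v : Fin (N + 1) → ℝ} (hv : ∀ m, 0 ≤ v m)
    (hsum : ∑ m, v m ≤ 1) {n : Fin (N + 1)} (hn : n ≠ 0) (hvn : 0 < v n) :
    (jensenKernel N a b *ᵥ v) 0 < 1 := by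
  have : v 0 + v n ≤ ∑ m, v m :=
    Finset.add_le_sum (fun m _ => hv m) (Finset.mem_univ _) (Finset.mem_univ _) hn.symm
  rw [mulVec_apply_zero]
  nlinarith

end jensenKernel

section Maximizer

variable {N : ℕ} {a b : ℝ} {w lam : Fin (N + 1) → ℝ}

theorem div_mulVec_eq_of_isMax (ha : a < 1)
    (hmax : ∀ μ : Fin (N + 1) → ℝ, (∀ n, 0 ≤ μ n) → ∑ n, μ n ≤ 1 →
      jensenObjective w (jensenKernel N a b) μ ≤ jensenObjective w (jensenKernel N a b) lam)
    (hsum : ∑ n, lam n ≤ 1) (hpos : ∀ n, 0 < lam n)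
    (hu : ∀ n, (jensenKernel N a b *ᵥ lam) n ≠ 0) {i j : Fin (N + 1)} (hi : i ≠ 0) (hj : j ≠ 0) :
    w i / (jensenKernel N a b *ᵥ lam) i = w j / (jensenKernel N a b *ᵥ lam) j := by
  set d : Fin (N + 1) → ℝ := Pi.single i 1 - Pi.single j 1
  have hd : ∑ n, d n = 0 := by simp [d, Finset.sum_sub_distrib]
  have hstat := jensenObjective_stationary hmax hsum hpos hu hd
  rw [jensenKernel.mulVec_of_sum_eq_zero (by simp [d, hi.symm, hj.symm]) hd] at hstat
  have hexpand : ∑ n, w n * (((1 - a) • d) n / (jensenKernel N a b *ᵥ lam) n) =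
      (1 - a) * (w i / (jensenKernel N a b *ᵥ lam) i - w j / (jensenKernel N a b *ᵥ lam) j) := by
    simp only [d, Pi.smul_apply, Pi.sub_apply, Pi.single_apply, smul_eq_mul, mul_sub,
      sub_div, Finset.sum_sub_distrib, ite_div, zero_div, mul_ite, mul_zero, Finset.sum_ite_eq',
      Finset.mem_univ, if_true]
    ring
  rw [hexpand] at hstat
  have := (mul_eq_zero.1 hstat).resolve_left (sub_ne_zero.2 ha.ne')
  linarith

theorem exists_pos_weight_of_isMax (hb : b < 1) (hw : ∀ n, 0 ≤ w n) (hw1 : ∑ n, w n = 1)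
    (hmax : ∀ μ : Fin (N + 1) → ℝ, (∀ n, 0 ≤ μ n) → ∑ n, μ n ≤ 1 →
      jensenObjective w (jensenKernel N a b) μ ≤ jensenObjective w (jensenKernel N a b) lam)
    (hlam : ∀ n, 0 ≤ lam n) (hsum : ∑ n, lam n ≤ 1) (hu0 : 0 < (jensenKernel N a b *ᵥ lam) 0)
    {n : Fin (N + 1)} (hn : n ≠ 0) (hn' : 0 < lam n) :
    ∃ k, k ≠ 0 ∧ 0 < w k := by
  by_contra! hle
  have hw0 : ∀ k, k ≠ 0 → w k = 0 := fun k hk => le_antisymm (hle k hk) (hw k)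
  have hobj : ∀ μ, jensenObjective w (jensenKernel N a b) μ =
      w 0 * Real.log ((jensenKernel N a b *ᵥ μ) 0) := fun μ =>
    Finset.sum_eq_single 0 (fun k _ hk => by rw [hw0 k hk, zero_mul]) (by simp)
  have hw01 : w 0 = 1 := by
    rwa [Finset.sum_eq_single 0 (fun k _ hk => hw0 k hk) (by simp)] at hw1
  have hcompare := hmax (Pi.single 0 1) (fun _ => by simp [Pi.single_apply, apply_ite]) (by simp)
  rw [hobj, hobj, hw01, jensenKernel.mulVec_apply_zero] at hcompare
  have hneg := Real.log_neg hu0 (jensenKernel.mulVec_apply_zero_lt_one hb hlam hsum hn hn')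
  simp only [Pi.single_eq_same, mul_one, Finset.sum_pi_single', Finset.mem_univ, ↓reduceIte,
    sub_add_cancel, Real.log_one, one_mul] at hcompare
  linarith

end Maximizer

theorem stmt_4_general (M N : ℕ) (hM : 1 ≤ M) (σ : ℝ)
    (a b : ℝ)
    (ha : a = (σ ^ 2 / (σ ^ 2 + 1)) ^ ((M : ℝ) / 2))
    (hb : b = (2 * σ ^ 2 / (2 * σ ^ 2 + 1)) ^ ((M : ℝ) / 2))
    (Kt : Matrix (Fin (N + 1)) (Fin (N + 1)) ℝ)
    (hKt : ∀ n n' : Fin (N + 1),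
      Kt n n' = if n = n' then 1 else if n = 0 ∨ n' = 0 then b else a)
    (lamStar : Fin (N + 1) → ℝ)
    (hlamStar_nonneg : ∀ n, 0 ≤ lamStar n) (hlamStar_sum : ∑ n, lamStar n = 1)
    (lamT : Fin (N + 1) → ℝ)
    (hlamT_mem : (∀ n, 0 ≤ lamT n) ∧ ∑ n, lamT n ≤ 1)
    (hmax : ∀ lam : Fin (N + 1) → ℝ, (∀ n, 0 ≤ lam n) → ∑ n, lam n ≤ 1 →
      ∑ n, lamStar n * Real.log (Kt.mulVec lam n)
        ≤ ∑ n, lamStar n * Real.log (Kt.mulVec lamT n))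
    (hposT : ∀ n, 0 < lamT n) :
    ∃ c₁ c₂ : ℝ, 0 ≤ c₁ ∧ ∀ n : Fin (N + 1), n ≠ 0 →
      lamT n = c₁ * lamStar n + c₂ := by
  obtain ⟨hnonneg, hsum⟩ := hlamT_mem
  have hp : (0 : ℝ) < (M : ℝ) / 2 := by
    have : (1 : ℝ) ≤ M := by exact_mod_cast hM
    linarith
  obtain ⟨ha0, ha1⟩ : a ∈ Set.Ico 0 1 := ha ▸ div_add_one_rpow_mem_Ico (sq_nonneg σ) hp
  obtain ⟨hb0, hb1⟩ : b ∈ Set.Ico 0 1 := hb ▸ div_add_one_rpow_mem_Ico (by positivity) hp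
  obtain rfl : Kt = jensenKernel N a b := Matrix.ext hKt
  set u := jensenKernel N a b *ᵥ lamT
  have hu : ∀ n, 0 < u n := fun n =>
    (hposT n).trans_le (jensenKernel.le_mulVec_apply ha0 hb0 hposT n)
  by_cases hk : ∃ k, k ≠ 0 ∧ 0 < lamStar k
  · obtain ⟨k, hk0, hk⟩ := hk
    refine ⟨u k / ((1 - a) * lamStar k), -((b - a) * lamT 0 + a * ∑ m, lamT m) / (1 - a),
      div_nonneg (hu k).le (mul_nonneg (by linarith) hk.le), fun n hn => ?_⟩
    have hratio := div_mulVec_eq_of_isMax ha1 hmax hsum hposT (fun n => (hu n).ne') hn hk0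
    have hun : u n = (1 - a) * lamT n + (b - a) * lamT 0 + a * ∑ m, lamT m :=
      jensenKernel.mulVec_apply_of_ne_zero hn lamT
    have : 1 - a ≠ 0 := by linarith
    rw [div_eq_div_iff (hu n).ne' (hu k).ne'] at hratio
    field_simp
    linear_combination -hratio - lamStar k * hun
  · exact ⟨0, 0, le_rfl, fun n hn => absurd (exists_pos_weight_of_isMax hb1 hlamStar_nonneg
      hlamStar_sum hmax hnonneg hsum (hu 0) hn (hposT n)) hk⟩

/-- with infinitely many random sensor groups, the Jensen-bound
maximizer is an affine function of the true rates on the nonzero indices. -/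
theorem stmt_4 (M N : ℕ) (hM : 1 ≤ M) (hN : 1 ≤ N) (σ : ℝ) (hσ : 0 < σ)
    (a b : ℝ)
    (ha : a = (σ ^ 2 / (σ ^ 2 + 1)) ^ ((M : ℝ) / 2))
    (hb : b = (2 * σ ^ 2 / (2 * σ ^ 2 + 1)) ^ ((M : ℝ) / 2))
    (Kt : Matrix (Fin (N + 1)) (Fin (N + 1)) ℝ)
    (hKt : ∀ n n' : Fin (N + 1),
      Kt n n' = if n = n' then 1 else if n = 0 ∨ n' = 0 then b else a)
    (lamStar : Fin (N + 1) → ℝ)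
    (hlamStar_nonneg : ∀ n, 0 ≤ lamStar n) (hlamStar_sum : ∑ n, lamStar n = 1)
    (hKinv : IsUnit Kt.det)
    (lamT : Fin (N + 1) → ℝ)
    (hlamT_mem : (∀ n, 0 ≤ lamT n) ∧ ∑ n, lamT n ≤ 1)
    (hmax : ∀ lam : Fin (N + 1) → ℝ, (∀ n, 0 ≤ lam n) → ∑ n, lam n ≤ 1 →
      ∑ n, lamStar n * Real.log (Kt.mulVec lam n)
        ≤ ∑ n, lamStar n * Real.log (Kt.mulVec lamT n))
    (hposT : ∀ n, 0 < lamT n) :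
    ∃ c₁ c₂ : ℝ, 0 ≤ c₁ ∧ ∀ n : Fin (N + 1), n ≠ 0 →
      lamT n = c₁ * lamStar n + c₂ :=
  stmt_4_general M N hM σ a b ha hb Kt hKt lamStar hlamStar_nonneg hlamStar_sum lamT hlamT_mem hmax
    hposT
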